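/- arXiv:1309.5817 — 4 statements merged into one kernel-verified Lean document; each statement's English description precedes it below -/
import Mathlib

section
/- With φ_n as defined (φ_n(ξ) = |ξ|^p for |ξ| ≤ n, quadratic extension for |ξ| > n, p ≥ 2), the inequality |ξ · φ_n'(ξ)| ≤ p · φ_n(ξ) holds for all ξ ∈ ℝ. -/
/-!
Since `φ_n` is even, its derivative is odd and it suffices to take `ξ > 0`. On `(0, n]` we have
`φ_n(ξ) = ξ ^ p`, so `ξ φ_n'(ξ) = p φ_n(ξ)`. Beyond `n`, `φ_n` is the quadratic `q` that agrees with
`ξ ^ p` to second order at `n`, and `p q(ξ) - ξ q'(ξ) = n ^ (p - 2) p (p - 1) (p - 2) / 2 * (ξ - n) ^ 2`.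
-/

open Real

noncomputable def phiN (p : ℝ) (n : ℕ) (ξ : ℝ) : ℝ :=
  if |ξ| ≤ (n : ℝ) then |ξ| ^ p
  else (n : ℝ) ^ (p - 2) *
    (p * (p - 1) / 2 * ξ ^ 2 - p * (p - 2) * n * |ξ| + (p - 1) * (p - 2) / 2 * n ^ 2)

noncomputable def phiN' (p : ℝ) (n : ℕ) (ξ : ℝ) : ℝ :=
  if |ξ| ≤ (n : ℝ) then p * (p - 1) * |ξ| ^ (p - 2)
  else (n : ℝ) ^ (p - 2) * p * (p - 1)

noncomputable def quadExt (p a x : ℝ) : ℝ :=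
  a ^ (p - 2) * (p * (p - 1) / 2 * x ^ 2 - p * (p - 2) * a * x + (p - 1) * (p - 2) / 2 * a ^ 2)

noncomputable def quadExtDeriv (p a x : ℝ) : ℝ :=
  a ^ (p - 2) * (p * (p - 1) * x - p * (p - 2) * a)

section QuadExt

variable {p a x : ℝ}

lemma hasDerivAt_quadExt (p a x : ℝ) : HasDerivAt (quadExt p a) (quadExtDeriv p a x) x := by
  have h := (((hasDerivAt_pow 2 x).const_mul (p * (p - 1) / 2)).sub
    ((hasDerivAt_id' x).const_mul (p * (p - 2) * a))).add_const
      ((p - 1) * (p - 2) / 2 * a ^ 2) |>.const_mul (a ^ (p - 2))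
  exact h.congr_deriv (by rw [quadExtDeriv]; ring)

lemma quadExt_self (hp : p ≠ 0) (ha : 0 ≤ a) : quadExt p a a = a ^ p := by
  have : a ^ p = a ^ (p - 2) * a ^ 2 := by
    rw [← rpow_two, ← rpow_add' ha (by simpa using hp)]
    ring_nf
  rw [this, quadExt]
  ring

lemma quadExtDeriv_self (ha : 0 < a) : quadExtDeriv p a a = p * a ^ (p - 1) := by
  have : a ^ (p - 1) = a ^ (p - 2) * a := by
    rw [← rpow_add_one ha.ne']
    ring_nf
  rw [this, quadExtDeriv]
  ring

lemma mul_quadExtDeriv_le (hp : 2 ≤ p) (ha : 0 ≤ a) :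
    x * quadExtDeriv p a x ≤ p * quadExt p a x := by
  have hdefect : p * quadExt p a x - x * quadExtDeriv p a x
      = a ^ (p - 2) * (p * (p - 1) * (p - 2) / 2) * (x - a) ^ 2 := by
    rw [quadExt, quadExtDeriv]
    ring
  have : 0 ≤ a ^ (p - 2) * (p * (p - 1) * (p - 2) / 2) * (x - a) ^ 2 := by
    have : 0 ≤ p * (p - 1) * (p - 2) :=
      mul_nonneg (mul_nonneg (by linarith) (by linarith)) (by linarith)
    positivity
  linarith

lemma mul_quadExtDeriv_nonneg (hp : 2 ≤ p) (ha : 0 ≤ a) (hx : a ≤ x) :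
    0 ≤ x * quadExtDeriv p a x := by
  have hx₀ : 0 ≤ x := ha.trans hx
  have : 0 ≤ p * (p - 1) * x - p * (p - 2) * a := by
    have hsplit : p * (p - 1) * x - p * (p - 2) * a = p * ((p - 2) * (x - a) + x) := by ring
    rw [hsplit]
    have := sub_nonneg.2 hp
    have := sub_nonneg.2 hx
    positivity
  unfold quadExtDeriv
  positivity

end QuadExt

section PhiN

variable {p : ℝ} {n : ℕ} {x : ℝ}

lemma phiN_neg (p : ℝ) (n : ℕ) (ξ : ℝ) : phiN p n (-ξ) = phiN p n ξ := by
  simp [phiN]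

lemma deriv_phiN_neg (p : ℝ) (n : ℕ) (ξ : ℝ) :
    deriv (phiN p n) (-ξ) = -deriv (phiN p n) ξ := by
  have h := deriv_comp_neg (f := phiN p n) (x := ξ)
  simp only [phiN_neg] at h
  rw [h, neg_neg]

lemma phiN_of_nonneg_of_le (hx₀ : 0 ≤ x) (hx : x ≤ n) : phiN p n x = x ^ p := by
  simp [phiN, abs_of_nonneg hx₀, hx]

lemma phiN_of_le (hp : p ≠ 0) (hx : n ≤ x) : phiN p n x = quadExt p n x := by
  rcases hx.eq_or_lt with rfl | hx
  · rw [phiN_of_nonneg_of_le (Nat.cast_nonneg n) le_rfl, quadExt_self hp (Nat.cast_nonneg n)]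
  · have hx₀ : 0 < x := (Nat.cast_nonneg n).trans_lt hx
    simp [phiN, quadExt, abs_of_pos hx₀, hx.not_ge]

lemma hasDerivWithinAt_phiN_Iic (hx₀ : 0 < x) (hx : x ≤ n) :
    HasDerivWithinAt (phiN p n) (p * x ^ (p - 1)) (Set.Iic (n : ℝ)) x := by
  have h := (hasDerivAt_rpow_const (p := p) (Or.inl hx₀.ne')).hasDerivWithinAt
    (s := Set.Iic (n : ℝ) ∩ Set.Ioi 0)
  refine (hasDerivWithinAt_inter (Ioi_mem_nhds hx₀)).1 (h.congr_of_mem ?_ ⟨hx, hx₀⟩)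
  exact fun y hy ↦ phiN_of_nonneg_of_le hy.2.le hy.1

lemma hasDerivWithinAt_phiN_Ici (hp : p ≠ 0) (hx : n ≤ x) :
    HasDerivWithinAt (phiN p n) (quadExtDeriv p n x) (Set.Ici (n : ℝ)) x :=
  (hasDerivAt_quadExt p n x).hasDerivWithinAt.congr_of_mem (fun _ hy ↦ phiN_of_le hp hy) hx

lemma hasDerivAt_phiN_of_le (hp : p ≠ 0) (hx₀ : 0 < x) (hx : x ≤ n) :
    HasDerivAt (phiN p n) (p * x ^ (p - 1)) x := by
  rcases hx.lt_or_eq with hx | rfl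
  · exact (hasDerivWithinAt_phiN_Iic hx₀ hx.le).hasDerivAt (Iic_mem_nhds hx)
  · have h := (hasDerivWithinAt_phiN_Iic hx₀ le_rfl).union
      (quadExtDeriv_self hx₀ ▸ hasDerivWithinAt_phiN_Ici hp le_rfl)
    rwa [Set.Iic_union_Ici, hasDerivWithinAt_univ] at h

lemma hasDerivAt_phiN_of_lt (hp : p ≠ 0) (hx : n < x) :
    HasDerivAt (phiN p n) (quadExtDeriv p n x) x :=
  (hasDerivWithinAt_phiN_Ici hp hx.le).hasDerivAt (Ici_mem_nhds hx)

end PhiN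

theorem abs_mul_deriv_phiN_le_general (p : ℝ) (hp : 2 ≤ p) (n : ℕ) (ξ : ℝ) :
    |ξ * deriv (phiN p n) ξ| ≤ p * phiN p n ξ := by
  wlog hξ : 0 ≤ ξ generalizing ξ
  · simpa [phiN_neg, deriv_phiN_neg] using this (-ξ) (by linarith)
  have hp₀ : p ≠ 0 := by positivity
  rcases hξ.eq_or_lt with rfl | hξ
  · simp [phiN, zero_rpow hp₀]
  rcases le_or_gt ξ n with hξn | hξn
  · have hmul : ξ * (p * ξ ^ (p - 1)) = p * ξ ^ p := by
      rw [rpow_sub_one hξ.ne']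
      field_simp
    rw [(hasDerivAt_phiN_of_le hp₀ hξ hξn).deriv, phiN_of_nonneg_of_le hξ.le hξn, hmul,
      abs_of_nonneg (by positivity)]
  · rw [(hasDerivAt_phiN_of_lt hp₀ hξn).deriv, phiN_of_le hp₀ hξn.le,
      abs_of_nonneg (mul_quadExtDeriv_nonneg hp (Nat.cast_nonneg n) hξn.le)]
    exact mul_quadExtDeriv_le hp (Nat.cast_nonneg n)

theorem abs_mul_deriv_phiN_le (p : ℝ) (hp : 2 ≤ p) (n : ℕ) (hn : 0 < n) (ξ : ℝ) :
    |ξ * deriv (phiN p n) ξ| ≤ p * phiN p n ξ :=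
  abs_mul_deriv_phiN_le_general p hp n ξ
end

section
/- With φ_n as defined (φ_n(ξ) = |ξ|^p for |ξ| ≤ n, quadratic extension for |ξ| > n, p ≥ 2), the inequality ξ² · φ_n''(ξ) ≤ p(p−1) · φ_n(ξ) holds for all ξ ∈ ℝ. -/
open Real

noncomputable def phiN'' (p : ℝ) (n : ℕ) (ξ : ℝ) : ℝ :=
  if |ξ| ≤ (n : ℝ) then p * (p - 1) * |ξ| ^ (p - 2)
  else (n : ℝ) ^ (p - 2) * p * (p - 1)

theorem sq_mul_abs_rpow_sub_two {p : ℝ} (hp : p ≠ 0) (ξ : ℝ) :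
    ξ ^ 2 * |ξ| ^ (p - 2) = |ξ| ^ p := by
  rw [← sq_abs, ← rpow_two, ← rpow_add' (abs_nonneg ξ) (by simpa using hp)]
  ring_nf

/-- The quadratic extension of `|ξ| ^ p` beyond `|ξ| = b` dominates `ξ ^ 2`, since the difference
factors as `(p - 2) / 2 * (a - b) * ((p - 1) * (a - b) + 2 * a)`. -/
theorem sq_le_quadratic_extension {p a b : ℝ} (hp : 2 ≤ p) (ha : 0 ≤ a) (hba : b ≤ a) :
    a ^ 2 ≤ p * (p - 1) / 2 * a ^ 2 - p * (p - 2) * b * a + (p - 1) * (p - 2) / 2 * b ^ 2 := by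
  have h : 0 ≤ (p - 2) / 2 * (a - b) * ((p - 1) * (a - b) + 2 * a) := by
    have : 0 ≤ p - 2 := by linarith
    have : 0 ≤ a - b := by linarith
    have : 0 ≤ p - 1 := by linarith
    positivity
  linarith [show (p - 2) / 2 * (a - b) * ((p - 1) * (a - b) + 2 * a) =
    p * (p - 1) / 2 * a ^ 2 - p * (p - 2) * b * a + (p - 1) * (p - 2) / 2 * b ^ 2 - a ^ 2 by ring]

theorem sq_mul_phiN''_le_general (p : ℝ) (hp : 2 ≤ p) (n : ℕ) (ξ : ℝ) :
    ξ ^ 2 * phiN'' p n ξ ≤ p * (p - 1) * phiN p n ξ := by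
  unfold phiN phiN''
  split_ifs with h
  · rw [← sq_mul_abs_rpow_sub_two (by linarith : p ≠ 0) ξ]
    exact le_of_eq (by ring)
  · have hc : 0 ≤ p * (p - 1) * (n : ℝ) ^ (p - 2) :=
      mul_nonneg (by nlinarith) (rpow_nonneg n.cast_nonneg _)
    have hq := sq_le_quadratic_extension hp (abs_nonneg ξ) (not_le.1 h).le
    rw [sq_abs] at hq
    calc ξ ^ 2 * ((n : ℝ) ^ (p - 2) * p * (p - 1))
        = p * (p - 1) * (n : ℝ) ^ (p - 2) * ξ ^ 2 := by ring
      _ ≤ p * (p - 1) * (n : ℝ) ^ (p - 2) * (p * (p - 1) / 2 * ξ ^ 2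
          - p * (p - 2) * n * |ξ| + (p - 1) * (p - 2) / 2 * n ^ 2) :=
        mul_le_mul_of_nonneg_left hq hc
      _ = _ := by ring

theorem sq_mul_phiN''_le (p : ℝ) (hp : 2 ≤ p) (n : ℕ) (hn : 0 < n) (ξ : ℝ) :
    ξ ^ 2 * phiN'' p n ξ ≤ p * (p - 1) * phiN p n ξ :=
  sq_mul_phiN''_le_general p hp n ξ
end

section
/- Let Γ : ℝ² → ℝ satisfy 0 ≤ Γ(ξ,ζ) ≤ C(1 + |ξ|^{p−1} + |ζ|^{p−1}) for some constants C > 0, p > 1. Let 0 < δ < 1 and let ψ_δ : ℝ → [0,∞) be supported in (−δ, δ) with ∫ψ_δ = 1. Define Υ(ξ,ζ) = ∫_{−∞}^{ξ} ∫_{ζ}^{∞} Γ(ξ',ζ') |ξ'−ζ'| ψ_δ(ξ'−ζ') dζ' dξ'. Then there is a constant C' (depending only on C and p) such that Υ(ξ,ζ) ≤ C' δ (1 + |ξ|^p + |ζ|^p) for all ξ ≥ ζ ∈ ℝ. -/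
/-!
The integrand vanishes unless `|ξ' - ζ'| < δ`. Hence the inner integral is zero for
`ξ' ≤ ζ - δ`, while for `ξ' ∈ (ζ - δ, ξ]` all relevant points lie in `[-B, B]` with
`B = 1 + |ξ| + |ζ|`, where `Γ(ξ', ζ') |ξ' - ζ'| ≤ 3 C B^(p-1) δ`; since `ψ` has mass one the inner
integral obeys the same bound. Integrating over an interval of length `ξ - ζ + δ ≤ B` gives
`3 C δ B^p ≤ 3^p C δ (1 + |ξ|^p + |ζ|^p)`.
-/
open MeasureTheory Set

lemma one_add_add_rpow_le {a b p : ℝ} (ha : 0 ≤ a) (hb : 0 ≤ b) (hp : 1 ≤ p) :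
    (1 + a + b) ^ p ≤ 3 ^ (p - 1) * (1 + a ^ p + b ^ p) := by
  have h := Real.rpow_sum_le_const_mul_sum_rpow_of_nonneg (s := Finset.univ) (f := ![1, a, b]) hp
    (by simp [Fin.forall_fin_succ, ha, hb])
  simpa [Fin.sum_univ_three, add_assoc] using h

lemma one_add_rpow_add_rpow_le {a b B q : ℝ} (ha : |a| ≤ B) (hb : |b| ≤ B) (hB : 1 ≤ B)
    (hq : 0 ≤ q) : 1 + |a| ^ q + |b| ^ q ≤ 3 * B ^ q := by
  have h1 : 1 ≤ B ^ q := Real.one_le_rpow hB hq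
  have ha' : |a| ^ q ≤ B ^ q := Real.rpow_le_rpow (abs_nonneg a) ha hq
  have hb' : |b| ^ q ≤ B ^ q := Real.rpow_le_rpow (abs_nonneg b) hb hq
  linarith

lemma abs_le_one_add_abs_add_abs_of_mem_Ioc {x y ξ ζ δ : ℝ} (hδ : δ ≤ 1)
    (hx : x ∈ Ioc (ζ - δ) ξ) (hy : y ∈ Ici ζ) (hxy : |x - y| < δ) :
    |x| ≤ 1 + |ξ| + |ζ| ∧ |y| ≤ 1 + |ξ| + |ζ| := by
  have := (abs_lt.mp hxy).1
  have := mem_Ici.mp hy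
  constructor <;> refine abs_le.mpr ⟨?_, ?_⟩ <;>
    linarith [hx.1, hx.2, neg_abs_le ζ, le_abs_self ξ, abs_nonneg ξ, abs_nonneg ζ]

lemma setIntegral_mul_le_of_le_on_support {α : Type*} [MeasurableSpace α] {μ : Measure α}
    {φ g : α → ℝ} {s : Set α} {K : ℝ} (hs : MeasurableSet s) (hφ : Integrable φ μ) (hφ0 : 0 ≤ φ)
    (hφ1 : ∫ a, φ a ∂μ ≤ 1) (hg0 : 0 ≤ g) (hK : 0 ≤ K)
    (hgK : ∀ a ∈ s, φ a ≠ 0 → g a ≤ K) :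
    ∫ a in s, g a * φ a ∂μ ≤ K := by
  have hpointwise : ∀ a ∈ s, g a * φ a ≤ K * φ a := fun a ha => by
    by_cases h : φ a = 0
    · simp [h]
    · exact mul_le_mul_of_nonneg_right (hgK a ha h) (hφ0 a)
  calc ∫ a in s, g a * φ a ∂μ ≤ ∫ a in s, K * φ a ∂μ :=
        integral_mono_of_nonneg (ae_of_all _ fun a => mul_nonneg (hg0 a) (hφ0 a))
          (hφ.const_mul K).integrableOn (ae_restrict_of_forall_mem hs hpointwise)
    _ = K * ∫ a in s, φ a ∂μ := integral_const_mul _ _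
    _ ≤ K * ∫ a, φ a ∂μ :=
        mul_le_mul_of_nonneg_left (setIntegral_le_integral hφ (ae_of_all _ hφ0)) hK
    _ ≤ K := mul_le_of_le_one_right hK hφ1

lemma setIntegral_Ici_mul_comp_sub_eq_zero {ψ g : ℝ → ℝ} {x ζ δ : ℝ}
    (hψ : Function.support ψ ⊆ Ioo (-δ) δ) (hx : x ≤ ζ - δ) :
    ∫ y in Ici ζ, g y * ψ (x - y) = 0 := by
  refine setIntegral_eq_zero_of_forall_eq_zero fun y hy => ?_
  have : ψ (x - y) = 0 :=
    Function.notMem_support.mp fun h => by linarith [(hψ h).1, mem_Ici.mp hy]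
  simp [this]

lemma integral_Iic_integral_Ici_mul_comp_sub_le {ψ : ℝ → ℝ} {G : ℝ → ℝ → ℝ} {ξ ζ δ K : ℝ}
    (hψ : Integrable ψ) (hψ0 : 0 ≤ ψ) (hψ1 : ∫ t, ψ t ≤ 1)
    (hψδ : Function.support ψ ⊆ Ioo (-δ) δ) (hG0 : ∀ x y, 0 ≤ G x y) (hK : 0 ≤ K)
    (hGK : ∀ x ∈ Ioc (ζ - δ) ξ, ∀ y ∈ Ici ζ, ψ (x - y) ≠ 0 → G x y ≤ K) (hζξ : ζ - δ ≤ ξ) :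
    ∫ x in Iic ξ, ∫ y in Ici ζ, G x y * ψ (x - y) ≤ (ξ - (ζ - δ)) * K := by
  have hinner : ∀ x ∈ Iic ξ,
      ∫ y in Ici ζ, G x y * ψ (x - y) ≤ (Ioc (ζ - δ) ξ).indicator (fun _ => K) x := by
    intro x hx
    by_cases hxδ : x ≤ ζ - δ
    · rw [indicator_of_notMem fun h => (not_le.mpr h.1) hxδ,
        setIntegral_Ici_mul_comp_sub_eq_zero hψδ hxδ]
    · have hxI : x ∈ Ioc (ζ - δ) ξ := ⟨not_le.mp hxδ, hx⟩
      rw [indicator_of_mem hxI]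
      refine setIntegral_mul_le_of_le_on_support measurableSet_Ici (hψ.comp_sub_left x)
        (fun y => hψ0 (x - y)) ?_ (hG0 x) hK (hGK x hxI)
      rwa [integral_sub_left_eq_self ψ volume x]
  have hindicator : Integrable ((Ioc (ζ - δ) ξ).indicator fun _ => K) (volume.restrict (Iic ξ)) :=
    ((integrable_indicator_iff measurableSet_Ioc).mpr
      (integrableOn_const measure_Ioc_lt_top.ne)).integrableOn
  calc ∫ x in Iic ξ, ∫ y in Ici ζ, G x y * ψ (x - y)
      ≤ ∫ x in Iic ξ, (Ioc (ζ - δ) ξ).indicator (fun _ => K) x :=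
        integral_mono_of_nonneg
          (ae_of_all _ fun x => integral_nonneg fun y => mul_nonneg (hG0 x y) (hψ0 _))
          hindicator (ae_restrict_of_forall_mem measurableSet_Iic hinner)
    _ = (ξ - (ζ - δ)) * K := by
        rw [setIntegral_indicator measurableSet_Ioc,
          inter_eq_self_of_subset_right Ioc_subset_Iic_self, setIntegral_const,
          Real.volume_real_Ioc_of_le hζξ, smul_eq_mul]

theorem upsilon_bound (C p : ℝ) (hC : 0 < C) (hp : 1 < p) :
    ∃ C' > (0:ℝ), ∀ δ : ℝ, 0 < δ → δ < 1 →
      ∀ ψ : ℝ → ℝ, Measurable ψ → (∀ t, 0 ≤ ψ t) →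
        Function.support ψ ⊆ Ioo (-δ) δ → (∫ t : ℝ, ψ t) = 1 →
      ∀ Γ : ℝ → ℝ → ℝ, Measurable (fun q : ℝ × ℝ => Γ q.1 q.2) →
        (∀ ξ ζ : ℝ, 0 ≤ Γ ξ ζ ∧ Γ ξ ζ ≤ C * (1 + |ξ| ^ (p - 1) + |ζ| ^ (p - 1))) →
      ∀ ξ ζ : ℝ, ζ ≤ ξ →
        (∫ ξ' in Iic ξ, ∫ ζ' in Ici ζ, Γ ξ' ζ' * |ξ' - ζ'| * ψ (ξ' - ζ')) ≤
          C' * δ * (1 + |ξ| ^ p + |ζ| ^ p) := by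
  refine ⟨3 ^ p * C, by positivity, ?_⟩
  intro δ hδ0 hδ1 ψ _ hψ0 hψδ hψ1 Γ _ hΓ ξ ζ hζξ
  have hψ : Integrable ψ := .of_integral_ne_zero (by rw [hψ1]; exact one_ne_zero)
  set B := 1 + |ξ| + |ζ|
  have hB : 1 ≤ B := by linarith [abs_nonneg ξ, abs_nonneg ζ]
  have hΓB : ∀ x ∈ Ioc (ζ - δ) ξ, ∀ y ∈ Ici ζ, ψ (x - y) ≠ 0 →
      Γ x y * |x - y| ≤ C * (3 * B ^ (p - 1)) * δ := by
    intro x hx y hy hxy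
    have hxyδ : |x - y| < δ := abs_lt.mpr (hψδ hxy)
    obtain ⟨hxB, hyB⟩ := abs_le_one_add_abs_add_abs_of_mem_Ioc hδ1.le hx hy hxyδ
    calc Γ x y * |x - y| ≤ C * (1 + |x| ^ (p - 1) + |y| ^ (p - 1)) * δ :=
          mul_le_mul (hΓ x y).2 hxyδ.le (abs_nonneg _) ((hΓ x y).1.trans (hΓ x y).2)
      _ ≤ C * (3 * B ^ (p - 1)) * δ := by
          gcongr; exact one_add_rpow_add_rpow_le hxB hyB hB (by linarith)
  calc _ ≤ (ξ - (ζ - δ)) * (C * (3 * B ^ (p - 1)) * δ) :=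
        integral_Iic_integral_Ici_mul_comp_sub_le hψ hψ0 hψ1.le hψδ
          (fun x y => mul_nonneg (hΓ x y).1 (abs_nonneg _)) (by positivity) hΓB (by linarith)
    _ ≤ B * (C * (3 * B ^ (p - 1)) * δ) := by
        gcongr; linarith [le_abs_self ξ, neg_abs_le ζ]
    _ = 3 * C * δ * B ^ p := by
        rw [Real.rpow_sub_one (by positivity)]; field_simp
    _ ≤ 3 * C * δ * (3 ^ (p - 1) * (1 + |ξ| ^ p + |ζ| ^ p)) := by
        gcongr; exact one_add_add_rpow_le (abs_nonneg ξ) (abs_nonneg ζ) hp.le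
    _ = 3 ^ p * C * δ * (1 + |ξ| ^ p + |ζ| ^ p) := by
        rw [Real.rpow_sub_one three_ne_zero]; field_simp
end

section
/- Let (X, λ) be a finite measure space and f : X × ℝ → [0,1] a kinetic function with Young measure ν. If f(z, ·)(1 − f(z, ·)) = 0 for a.e. (z, ξ), then there exists a measurable u : X → ℝ with f(z, ξ) = 𝟙_{u(z)>ξ} for a.e. (z, ξ); moreover u(z) = ∫_ℝ (f(z,ξ) − 𝟙_{0>ξ}) dξ for a.e. z. -/
/-!
The tail `ξ ↦ ν_z((ξ, ∞))` of a probability measure is antitone, tends to `1` at `-∞` and to `0`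
at `+∞`. If it takes only the values `0` and `1` almost everywhere, it is a.e. the step function
`𝟙_{a > ξ}`, where `a` is the point at which it crosses `1/2`; and `a` is recovered as
`∫ (𝟙_{a > ξ} - 𝟙_{0 > ξ}) dξ`. Since `ν` is a kernel, `(z, ξ) ↦ ν_z((ξ, ∞))` is jointly
measurable, so `u` is measurable and Fubini assembles the fibrewise statements.
-/

open MeasureTheory Set Filter Topology ProbabilityTheory

lemma integral_ite_gt_sub_ite_gt_of_le {a b : ℝ} (hba : b ≤ a) :
    ∫ ξ : ℝ, ((if a > ξ then (1:ℝ) else 0) - if b > ξ then (1:ℝ) else 0) = a - b := by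
  have hind : (fun ξ : ℝ => (if a > ξ then (1:ℝ) else 0) - if b > ξ then (1:ℝ) else 0)
      = (Ico b a).indicator 1 := by
    ext ξ
    by_cases hb : b > ξ <;> by_cases ha : a > ξ <;> simp [indicator, ha, hb]
    all_goals linarith
  rw [hind, integral_indicator_one measurableSet_Ico, Real.volume_real_Ico_of_le hba]

lemma integral_ite_gt_sub_ite_gt (a b : ℝ) :
    ∫ ξ : ℝ, ((if a > ξ then (1:ℝ) else 0) - if b > ξ then (1:ℝ) else 0) = a - b := by
  rcases le_total b a with hba | hab
  · exact integral_ite_gt_sub_ite_gt_of_le hba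
  · rw [← neg_sub, ← integral_ite_gt_sub_ite_gt_of_le hab, ← integral_neg]
    simp_rw [neg_sub]

lemma Antitone.exists_ae_eq_ite_gt {F : ℝ → ℝ} (hF : Antitone F)
    (hbot : Tendsto F atBot (𝓝 1)) (htop : Tendsto F atTop (𝓝 0))
    (h01 : ∀ᵐ ξ, F ξ = 0 ∨ F ξ = 1) :
    ∃ a : ℝ, ∀ᵐ ξ, F ξ = if a > ξ then 1 else 0 := by
  set S := {ξ | 1 / 2 ≤ F ξ}
  have hne : S.Nonempty := (hbot.eventually (eventually_ge_nhds (by norm_num))).exists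
  have hbdd : BddAbove S := by
    obtain ⟨b, hb⟩ := (htop.eventually (eventually_lt_nhds (by norm_num : (0:ℝ) < 1 / 2))).exists
    exact ⟨b, fun ξ (hξ : 1 / 2 ≤ F ξ) => not_lt.1 fun hbξ => (hξ.trans (hF hbξ.le)).not_gt hb⟩
  refine ⟨sSup S, ?_⟩
  filter_upwards [h01, (countable_singleton (sSup S)).ae_notMem volume] with ξ hξ hξa
  rcases lt_or_gt_of_ne (hξa : ξ ≠ sSup S) with hlt | hgt
  · obtain ⟨η, hηS, hξη⟩ := exists_lt_of_lt_csSup hne hlt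
    have : 1 / 2 ≤ F ξ := hηS.trans (hF hξη.le)
    rw [if_pos hlt]
    rcases hξ with h | h <;> [linarith; exact h]
  · have : F ξ < 1 / 2 := not_le.1 fun hξS => (le_csSup hbdd hξS).not_gt hgt
    rw [if_neg hgt.not_gt]
    rcases hξ with h | h <;> [exact h; linarith]

lemma ProbabilityTheory.Kernel.measurable_apply_Ioi {X : Type*} [MeasurableSpace X]
    (κ : Kernel X ℝ) [IsSFiniteKernel κ] : Measurable fun q : X × ℝ => κ q.1 (Ioi q.2) :=
  measurable_kernel_prodMk_left (κ := κ.prodMkRight ℝ)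
    (measurableSet_lt measurable_fst.snd measurable_snd)

lemma measureReal_Ioi_eq_one_sub_cdf (μ : Measure ℝ) [IsProbabilityMeasure μ] (ξ : ℝ) :
    μ.real (Ioi ξ) = 1 - cdf μ ξ := by
  rw [cdf_eq_real, ← compl_Iic, probReal_compl_eq_one_sub measurableSet_Iic]

lemma ae_measureReal_Ioi_eq_ite_integral (μ : Measure ℝ) [IsProbabilityMeasure μ]
    (h : ∀ᵐ ξ, μ.real (Ioi ξ) * (1 - μ.real (Ioi ξ)) = 0) :
    ∀ᵐ ξ, μ.real (Ioi ξ) =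
      if (∫ η, (μ.real (Ioi η) - if (0:ℝ) > η then 1 else 0)) > ξ then 1 else 0 := by
  set F := fun ξ => μ.real (Ioi ξ)
  have hF : F = fun ξ => 1 - cdf μ ξ := funext (measureReal_Ioi_eq_one_sub_cdf μ)
  have hbot : Tendsto F atBot (𝓝 1) := by
    simpa [hF] using (tendsto_cdf_atBot μ).const_sub 1
  have htop : Tendsto F atTop (𝓝 0) := by
    simpa [hF] using (tendsto_cdf_atTop μ).const_sub 1
  have h01 : ∀ᵐ ξ, F ξ = 0 ∨ F ξ = 1 :=
    h.mono fun _ hξ => (mul_eq_zero.1 hξ).imp_right fun h1 => (sub_eq_zero.1 h1).symm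
  have hanti : Antitone F := fun _ _ hxy => measureReal_mono (Ioi_subset_Ioi hxy)
  obtain ⟨a, ha⟩ := hanti.exists_ae_eq_ite_gt hbot htop h01
  have hint : ∫ η, (F η - if (0:ℝ) > η then 1 else 0) = a := by
    rw [integral_congr_ae (ha.mono fun _ hη => congrArg (· - _) hη), integral_ite_gt_sub_ite_gt,
      sub_zero]
  rwa [hint]

theorem kinetic_function_is_indicator_general {X : Type*} [MeasurableSpace X]
    (lam : Measure X)
    (ν : X → Measure ℝ) (hprob : ∀ z, IsProbabilityMeasure (ν z))
    (hmeasν : Measurable ν)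
    (f : X → ℝ → ℝ) (hf : ∀ z ξ, f z ξ = ((ν z) (Ioi ξ)).toReal)
    (hchi : ∀ᵐ q ∂(lam.prod (volume : Measure ℝ)), f q.1 q.2 * (1 - f q.1 q.2) = 0) :
    ∃ u : X → ℝ, Measurable u ∧
      (∀ᵐ q ∂(lam.prod (volume : Measure ℝ)),
        f q.1 q.2 = if u q.1 > q.2 then (1:ℝ) else 0) ∧
      (∀ᵐ z ∂lam, u z = ∫ ξ : ℝ, (f z ξ - if (0:ℝ) > ξ then (1:ℝ) else 0)) := by
  obtain rfl : f = fun z ξ => (ν z).real (Ioi ξ) := funext₂ hf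
  let κ : Kernel X ℝ := ⟨ν, hmeasν⟩
  have : IsMarkovKernel κ := ⟨hprob⟩
  have hF : Measurable fun q : X × ℝ => (ν q.1).real (Ioi q.2) :=
    κ.measurable_apply_Ioi.ennreal_toReal
  have hstep : Measurable fun q : X × ℝ => if (0:ℝ) > q.2 then (1:ℝ) else 0 :=
    measurable_const.ite (measurableSet_lt measurable_snd measurable_const) measurable_const
  set u := fun z => ∫ ξ, ((ν z).real (Ioi ξ) - if (0:ℝ) > ξ then (1:ℝ) else 0)
  have hu : Measurable u := (hF.sub hstep).stronglyMeasurable.integral_prod_right'.measurable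
  refine ⟨u, hu, (Measure.ae_prod_iff_ae_ae ?_).2 ?_, ae_of_all _ fun _ => rfl⟩
  · exact measurableSet_eq_fun hF
      (measurable_const.ite (measurableSet_lt measurable_snd (hu.comp measurable_fst))
        measurable_const)
  · filter_upwards [Measure.ae_ae_of_ae_prod hchi] with z hz
    exact ae_measureReal_Ioi_eq_ite_integral (ν z) hz

theorem kinetic_function_is_indicator {X : Type*} [MeasurableSpace X]
    (lam : Measure X) [IsFiniteMeasure lam]
    (ν : X → Measure ℝ) (hprob : ∀ z, IsProbabilityMeasure (ν z))
    (hmeasν : Measurable ν)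
    (hvanish : ∀ p : ℝ, 1 ≤ p →
      (∫⁻ z, ∫⁻ ξ, ENNReal.ofReal (|ξ| ^ p) ∂(ν z) ∂lam) < ⊤)
    (f : X → ℝ → ℝ) (hf : ∀ z ξ, f z ξ = ((ν z) (Ioi ξ)).toReal)
    (hchi : ∀ᵐ q ∂(lam.prod (volume : Measure ℝ)), f q.1 q.2 * (1 - f q.1 q.2) = 0) :
    ∃ u : X → ℝ, Measurable u ∧
      (∀ᵐ q ∂(lam.prod (volume : Measure ℝ)),
        f q.1 q.2 = if u q.1 > q.2 then (1:ℝ) else 0) ∧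
      (∀ᵐ z ∂lam, u z = ∫ ξ : ℝ, (f z ξ - if (0:ℝ) > ξ then (1:ℝ) else 0)) :=
  kinetic_function_is_indicator_general lam ν hprob hmeasν f hf hchi
end
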